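/- Let φ be an Orlicz function taking only finite values, satisfying the Δ₂-condition at zero, and such that ∑_{n=n₁}^∞ φ(1/n) < ∞ for some n₁ ∈ ℕ. Then for every sequence (x_n) of elements of ces_φ: ‖x_n‖_φ → 0 if and only if ρ_φ(x_n) → 0. -/

import Mathlib

open scoped ENNReal
open Filter

/-- An Orlicz function: `φ : ℝ → [0,∞]` even, convex, left continuous on `ℝ₊`,
continuous at zero, with `φ 0 = 0` and `φ u → ∞` as `u → ∞`. -/
structure OrliczFunction where
  toFun : ℝ → ℝ≥0∞
  even' : ∀ u : ℝ, toFun (-u) = toFun u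
  convex' : ∀ u v t : ℝ, 0 ≤ t → t ≤ 1 →
    toFun (t * u + (1 - t) * v) ≤ ENNReal.ofReal t * toFun u + ENNReal.ofReal (1 - t) * toFun v
  map_zero' : toFun 0 = 0
  leftContinuous' : ∀ t : ℝ, 0 < t → Tendsto toFun (nhdsWithin t (Set.Iio t)) (nhds (toFun t))
  continuousAtZero' : Tendsto toFun (nhds 0) (nhds 0)
  tendsto_top' : Tendsto toFun atTop (nhds ⊤)

/-- The Cesàro mean `σx(n) = (1/n) ∑_{j=1}^n |x j|` (with `0`-based indexing). -/
noncomputable def cesaroMean (x : ℕ → ℝ) (n : ℕ) : ℝ :=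
  (∑ j ∈ Finset.range (n + 1), |x j|) / (n + 1)

/-- The modular `ρ_φ(x) = ∑_i φ(σx(i))`. -/
noncomputable def rho (φ : OrliczFunction) (x : ℕ → ℝ) : ℝ≥0∞ :=
  ∑' n : ℕ, φ.toFun (cesaroMean x n)

/-- The Cesàro–Orlicz sequence space `ces_φ`. -/
def cesOrlicz (φ : OrliczFunction) : Set (ℕ → ℝ) :=
  {x | ∃ lam : ℝ, 0 < lam ∧ rho φ (fun i => lam * x i) < ⊤}

/-- The Luxemburg norm `‖x‖_φ = inf {λ > 0 : ρ_φ(x/λ) ≤ 1}`. -/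
noncomputable def luxNorm (φ : OrliczFunction) (x : ℕ → ℝ) : ℝ :=
  sInf {lam : ℝ | 0 < lam ∧ rho φ (fun i => x i / lam) ≤ 1}

/-- The subspace `A_φ` of `ces_φ`. -/
def Aphi (φ : OrliczFunction) : Set (ℕ → ℝ) :=
  {x | x ∈ cesOrlicz φ ∧ ∀ k : ℝ, 0 < k → ∃ nk : ℕ,
    ∑' n : ℕ, φ.toFun ((k / ((nk + n + 1 : ℕ) : ℝ)) * ∑ i ∈ Finset.range (nk + n + 1), |x i|) < ⊤}

/-- `∃ n₁, ∑_{n=n₁}^∞ φ(1/n) < ∞`. -/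
def TailFinite (φ : OrliczFunction) : Prop :=
  ∃ n₁ : ℕ, ∑' n : ℕ, φ.toFun (((n₁ + n + 1 : ℕ) : ℝ)⁻¹) < ⊤

/-- The `Δ₂`-condition at zero. -/
def Delta2Zero (φ : OrliczFunction) : Prop :=
  ∃ K : ℝ, 0 < K ∧ ∃ a : ℝ, 0 < a ∧ 0 < φ.toFun a ∧
    ∀ u : ℝ, 0 ≤ u → u ≤ a → φ.toFun (2 * u) ≤ ENNReal.ofReal K * φ.toFun u

/-- `φ` takes only finite values. -/
def FiniteValued (φ : OrliczFunction) : Prop := ∀ u : ℝ, φ.toFun u ≠ ⊤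


/- The modular controls the norm from both sides near zero. Convexity with `φ 0 = 0` gives
`ρ(t x) ≤ t ρ(x)` for `t ≤ 1`, so `‖x‖ < 1` forces `ρ(x) ≤ ‖x‖`. Conversely, `Δ₂` makes `φ(b) > 0` for
every `b > 0`, and `ρ(x) < φ(b)` puts every Cesàro mean `σx(n)` below `b`. Taking `2ᵐ ≥ 1/ε` and `b`
so small that `2ᵐ b` stays in the range of the `Δ₂`-condition gives `ρ(x/ε) ≤ Kᵐ ρ(x)`, which is
at most `1`, i.e. `‖x‖ ≤ ε`, once `ρ(x) ≤ K⁻ᵐ`. -/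

namespace OrliczFunction

variable (φ : OrliczFunction)

theorem map_mul_le {t : ℝ} (u : ℝ) (ht0 : 0 ≤ t) (ht1 : t ≤ 1) :
    φ.toFun (t * u) ≤ ENNReal.ofReal t * φ.toFun u := by
  simpa [φ.map_zero'] using φ.convex' u 0 t ht0 ht1

theorem monotoneOn : MonotoneOn φ.toFun (Set.Ici 0) := by
  intro u (hu : 0 ≤ u) v _ huv
  rcases (hu.trans huv).eq_or_lt with rfl | hv
  · rw [le_antisymm huv hu]
  · calc φ.toFun u = φ.toFun (u / v * v) := by rw [div_mul_cancel₀ u hv.ne']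
      _ ≤ ENNReal.ofReal (u / v) * φ.toFun v :=
          φ.map_mul_le v (div_nonneg hu hv.le) (div_le_one_of_le₀ huv hv.le)
      _ ≤ φ.toFun v :=
          mul_le_of_le_one_left' (ENNReal.ofReal_le_one.2 (div_le_one_of_le₀ huv hv.le))

def DoublingUpTo (K a : ℝ) : Prop :=
  ∀ u : ℝ, 0 ≤ u → u ≤ a → φ.toFun (2 * u) ≤ ENNReal.ofReal K * φ.toFun u

variable {φ} {K a : ℝ}

theorem DoublingUpTo.map_two_pow_mul_le (h : φ.DoublingUpTo K a) (m : ℕ) {u : ℝ} (hu : 0 ≤ u)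
    (hmu : 2 ^ m * u ≤ 2 * a) : φ.toFun (2 ^ m * u) ≤ ENNReal.ofReal K ^ m * φ.toFun u := by
  induction m generalizing u with
  | zero => simp
  | succ m ih =>
    have hm : 2 ^ m * u ≤ a := by rw [pow_succ] at hmu; linarith
    have hm0 : 0 ≤ 2 ^ m * u := by positivity
    calc φ.toFun (2 ^ (m + 1) * u) = φ.toFun (2 * (2 ^ m * u)) := by ring_nf
      _ ≤ ENNReal.ofReal K * φ.toFun (2 ^ m * u) := h _ hm0 hm
      _ ≤ ENNReal.ofReal K * (ENNReal.ofReal K ^ m * φ.toFun u) := by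
          gcongr
          exact ih hu (by linarith)
      _ = ENNReal.ofReal K ^ (m + 1) * φ.toFun u := by ring

theorem DoublingUpTo.map_pos (h : φ.DoublingUpTo K a) (ha0 : 0 < a) (ha : 0 < φ.toFun a)
    {b : ℝ} (hb : 0 < b) : 0 < φ.toFun b := by
  obtain ⟨m, hm⟩ := pow_unbounded_of_one_lt (a / b) one_lt_two
  have h2m : (0 : ℝ) < 2 ^ m := by positivity
  have hab : a / 2 ^ m ≤ b := by
    rw [div_le_iff₀ h2m]; rw [div_lt_iff₀ hb] at hm; linarith
  have key : φ.toFun a ≤ ENNReal.ofReal K ^ m * φ.toFun b :=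
    calc φ.toFun a = φ.toFun (2 ^ m * (a / 2 ^ m)) := by rw [mul_div_cancel₀ a h2m.ne']
      _ ≤ ENNReal.ofReal K ^ m * φ.toFun (a / 2 ^ m) :=
          h.map_two_pow_mul_le m (by positivity) (by rw [mul_div_cancel₀ a h2m.ne']; linarith)
      _ ≤ ENNReal.ofReal K ^ m * φ.toFun b := by
          gcongr
          exact φ.monotoneOn (div_nonneg ha0.le h2m.le) hb.le hab
  refine pos_iff_ne_zero.2 fun h0 => ha.ne' ?_
  simpa [h0] using key

end OrliczFunction

section Modular

variable {φ : OrliczFunction}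

theorem cesaroMean_nonneg (x : ℕ → ℝ) (n : ℕ) : 0 ≤ cesaroMean x n :=
  div_nonneg (Finset.sum_nonneg fun _ _ => abs_nonneg _) (by positivity)

theorem cesaroMean_mul {c : ℝ} (hc : 0 ≤ c) (x : ℕ → ℝ) (n : ℕ) :
    cesaroMean (fun i => c * x i) n = c * cesaroMean x n := by
  simp only [cesaroMean, abs_mul, abs_of_nonneg hc, ← Finset.mul_sum, mul_div_assoc]

theorem rho_mul_le {t : ℝ} (ht0 : 0 ≤ t) (ht1 : t ≤ 1) (x : ℕ → ℝ) :
    rho φ (fun i => t * x i) ≤ ENNReal.ofReal t * rho φ x := by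
  rw [rho, rho, ← ENNReal.tsum_mul_left]
  refine ENNReal.tsum_le_tsum fun n => ?_
  rw [cesaroMean_mul ht0]
  exact φ.map_mul_le _ ht0 ht1

theorem rho_le_of_rho_div_le_one {x : ℕ → ℝ} {lam : ℝ} (h0 : 0 < lam) (h1 : lam ≤ 1)
    (hr : rho φ (fun i => x i / lam) ≤ 1) : rho φ x ≤ ENNReal.ofReal lam :=
  calc rho φ x = rho φ (fun i => lam * (x i / lam)) := by
        simp only [mul_div_cancel₀ _ h0.ne']
    _ ≤ ENNReal.ofReal lam * rho φ (fun i => x i / lam) := rho_mul_le h0.le h1 _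
    _ ≤ ENNReal.ofReal lam := mul_le_of_le_one_right' hr

theorem exists_rho_div_le_one {x : ℕ → ℝ} (hx : x ∈ cesOrlicz φ) :
    ∃ lam : ℝ, 0 < lam ∧ rho φ (fun i => x i / lam) ≤ 1 := by
  obtain ⟨c, hc, hfin⟩ := hx
  set R := (rho φ fun i => c * x i).toReal
  have hR : 0 ≤ R := ENNReal.toReal_nonneg
  refine ⟨(R + 1) / c, by positivity, ?_⟩
  have hdiv : (fun i => x i / ((R + 1) / c)) = fun i => (R + 1)⁻¹ * (c * x i) := by
    funext i; field_simp
  calc rho φ (fun i => x i / ((R + 1) / c))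
      ≤ ENNReal.ofReal (R + 1)⁻¹ * rho φ (fun i => c * x i) := by
        rw [hdiv]
        exact rho_mul_le (by positivity) (inv_le_one_of_one_le₀ (by linarith)) _
    _ = ENNReal.ofReal (R / (R + 1)) := by
        rw [← ENNReal.ofReal_toReal hfin.ne, ← ENNReal.ofReal_mul (by positivity), inv_mul_eq_div]
    _ ≤ 1 := ENNReal.ofReal_le_one.2 ((div_le_one (by positivity)).2 (by linarith))

theorem luxNorm_nonneg (x : ℕ → ℝ) : 0 ≤ luxNorm φ x :=
  Real.sInf_nonneg fun _ hlam => hlam.1.le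

theorem luxNorm_le_of_rho_div_le_one {x : ℕ → ℝ} {ε : ℝ} (hε : 0 < ε)
    (h : rho φ (fun i => x i / ε) ≤ 1) : luxNorm φ x ≤ ε :=
  csInf_le ⟨0, fun _ hlam => hlam.1.le⟩ ⟨hε, h⟩

theorem rho_le_ofReal_luxNorm {x : ℕ → ℝ} (hx : x ∈ cesOrlicz φ) (h1 : luxNorm φ x < 1) :
    rho φ x ≤ ENNReal.ofReal (luxNorm φ x) := by
  have hle : ∀ r ∈ Set.Ioo (luxNorm φ x) 1, rho φ x ≤ ENNReal.ofReal r := by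
    rintro r ⟨hr, hr1⟩
    obtain ⟨lam, ⟨hlam0, hlam⟩, hlamr⟩ :=
      (csInf_lt_iff ⟨0, fun _ hlam => hlam.1.le⟩ (exists_rho_div_le_one hx)).1 hr
    exact (rho_le_of_rho_div_le_one hlam0 (hlamr.trans hr1).le hlam).trans
      (ENNReal.ofReal_le_ofReal hlamr.le)
  exact ge_of_tendsto (ENNReal.continuous_ofReal.continuousWithinAt.tendsto)
    (Filter.mem_of_superset (Ioo_mem_nhdsGT h1) hle)

theorem cesaroMean_le_of_rho_lt {x : ℕ → ℝ} {b : ℝ} (hb : 0 ≤ b) (h : rho φ x < φ.toFun b)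
    (n : ℕ) : cesaroMean x n ≤ b := by
  by_contra! hlt
  exact h.not_ge ((φ.monotoneOn hb (cesaroMean_nonneg x n) hlt.le).trans (ENNReal.le_tsum n))

theorem rho_div_le_of_cesaroMean_le {K a : ℝ} (h : φ.DoublingUpTo K a) {x : ℕ → ℝ} {ε : ℝ}
    {m : ℕ} (hε : 0 < ε) (hm : ε⁻¹ ≤ 2 ^ m) (hσ : ∀ n, 2 ^ m * cesaroMean x n ≤ 2 * a) :
    rho φ (fun i => x i / ε) ≤ ENNReal.ofReal K ^ m * rho φ x := by
  simp only [div_eq_inv_mul]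
  rw [rho, rho, ← ENNReal.tsum_mul_left]
  refine ENNReal.tsum_le_tsum fun n => ?_
  have hσn := cesaroMean_nonneg x n
  rw [cesaroMean_mul (inv_nonneg.2 hε.le)]
  calc φ.toFun (ε⁻¹ * cesaroMean x n) ≤ φ.toFun (2 ^ m * cesaroMean x n) :=
        φ.monotoneOn (Set.mem_Ici.2 (by positivity)) (Set.mem_Ici.2 (by positivity)) (by gcongr)
    _ ≤ ENNReal.ofReal K ^ m * φ.toFun (cesaroMean x n) := h.map_two_pow_mul_le m hσn (hσ n)

theorem exists_forall_rho_le_rho_div_le_one {K a : ℝ} (h : φ.DoublingUpTo K a) (ha0 : 0 < a)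
    (ha : 0 < φ.toFun a) {ε : ℝ} (hε : 0 < ε) :
    ∃ δ > 0, ∀ x : ℕ → ℝ, rho φ x ≤ δ → rho φ (fun i => x i / ε) ≤ 1 := by
  obtain ⟨m, hm⟩ := pow_unbounded_of_one_lt ε⁻¹ one_lt_two
  have hb : (0 : ℝ) < a / 2 ^ m := by positivity
  obtain ⟨δ, hδ0, hδb⟩ := exists_between (h.map_pos ha0 ha hb)
  have hKm : ENNReal.ofReal K ^ m ≠ ⊤ := ENNReal.pow_ne_top ENNReal.ofReal_ne_top
  refine ⟨min δ (ENNReal.ofReal K ^ m)⁻¹, lt_min hδ0 (ENNReal.inv_pos.2 hKm), fun x hx => ?_⟩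
  have hσ (n : ℕ) : 2 ^ m * cesaroMean x n ≤ 2 * a := by
    have := cesaroMean_le_of_rho_lt hb.le ((hx.trans (min_le_left _ _)).trans_lt hδb) n
    rw [le_div_iff₀ (by positivity)] at this
    linarith
  calc rho φ (fun i => x i / ε) ≤ ENNReal.ofReal K ^ m * rho φ x :=
        rho_div_le_of_cesaroMean_le h hε hm.le hσ
    _ ≤ ENNReal.ofReal K ^ m * (ENNReal.ofReal K ^ m)⁻¹ := by
        gcongr
        exact hx.trans (min_le_right _ _)
    _ ≤ 1 := ENNReal.mul_inv_le_one _

end Modular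

theorem stmt_10_general (φ : OrliczFunction) (hδ : Delta2Zero φ)
    (xs : ℕ → ℕ → ℝ) (hmem : ∀ n, xs n ∈ cesOrlicz φ) :
    Tendsto (fun n => luxNorm φ (xs n)) atTop (nhds 0) ↔
      Tendsto (fun n => rho φ (xs n)) atTop (nhds 0) := by
  obtain ⟨K, -, a, ha0, ha, hΔ⟩ := hδ
  constructor
  · intro h
    have hofReal : Tendsto (fun n => ENNReal.ofReal (luxNorm φ (xs n))) atTop (nhds 0) := by
      simpa using ENNReal.tendsto_ofReal h
    refine tendsto_of_tendsto_of_tendsto_of_le_of_le' tendsto_const_nhds hofReal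
      (Eventually.of_forall fun _ => zero_le) ?_
    filter_upwards [h.eventually (gt_mem_nhds one_pos)] with n hn
    exact rho_le_ofReal_luxNorm (hmem n) hn
  · intro h
    refine tendsto_order.2 ⟨fun c hc => Eventually.of_forall fun n =>
      hc.trans_le (luxNorm_nonneg _), fun ε hε => ?_⟩
    obtain ⟨δ, hδ0, hρ⟩ := exists_forall_rho_le_rho_div_le_one hΔ ha0 ha (half_pos hε)
    filter_upwards [ENNReal.tendsto_nhds_zero.1 h δ hδ0] with n hn
    exact (luxNorm_le_of_rho_div_le_one (half_pos hε) (hρ _ hn)).trans_lt (half_lt_self hε)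

/-- if `φ ∈ Δ₂(0)` then `‖x_n‖_φ → 0 ↔ ρ_φ(x_n) → 0`. -/
theorem stmt_10 (φ : OrliczFunction) (hfin : FiniteValued φ) (hδ : Delta2Zero φ)
    (htail : TailFinite φ) (xs : ℕ → ℕ → ℝ) (hmem : ∀ n, xs n ∈ cesOrlicz φ) :
    Tendsto (fun n => luxNorm φ (xs n)) atTop (nhds 0) ↔
      Tendsto (fun n => rho φ (xs n)) atTop (nhds 0) :=
  stmt_10_general φ hδ xs hmem
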